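/- Fix b > −3/16 and set γ = 1 + (16/3)b (so γ > 0). Let ω > 0 and c = 2√ω. Then the function Φ(x) = ( 4c / ((c x)² + γ) )^{1/2} is a smooth, strictly positive, even function on ℝ, tends to 0 as |x| → ∞, and satisfies the ordinary differential equation −Φ''(x) + (c/2)·Φ(x)³ − (3/16)·γ·Φ(x)⁵ = 0 for all x ∈ ℝ. -/

import Mathlib

open MeasureTheory Real Filter

/-- The algebraic soliton profile of the derivative NLS after gauge transformation. -/
noncomputable def PhiA (γ c x : ℝ) : ℝ :=
  Real.sqrt (4 * c / ((c * x) ^ 2 + γ))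

/-!
Writing `q(x) = c²x² + γ`, the profile is `Φ = √(4c) · u` with `u = q^{-1/2}`. From
`u' = -c²x u³` and `u² q = 1` one gets `u'' = 2c²u³ - 3c²γu⁵`, and `√(4c)² = 4c` turns
this into `Φ'' = (c/2)Φ³ - (3/16)γΦ⁵`.
-/

noncomputable def invSqrtQuadratic (a g x : ℝ) : ℝ :=
  (√(a * x ^ 2 + g))⁻¹

section InvSqrtQuadratic

variable {a g : ℝ}

theorem hasDerivAt_invSqrtQuadratic {x : ℝ} (hq : 0 < a * x ^ 2 + g) :
    HasDerivAt (invSqrtQuadratic a g) (-(a * x) * invSqrtQuadratic a g x ^ 3) x := by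
  have hq' : HasDerivAt (fun y => a * y ^ 2 + g) (a * (2 * x)) x := by
    simpa using ((hasDerivAt_pow 2 x).const_mul a).add_const g
  have hs : √(a * x ^ 2 + g) ≠ 0 := Real.sqrt_ne_zero'.mpr hq
  refine ((hq'.sqrt hq.ne').inv hs).congr_deriv ?_
  unfold invSqrtQuadratic
  field_simp

theorem deriv_invSqrtQuadratic (ha : 0 ≤ a) (hg : 0 < g) :
    deriv (invSqrtQuadratic a g) = fun x => -(a * x) * invSqrtQuadratic a g x ^ 3 :=
  funext fun _ => (hasDerivAt_invSqrtQuadratic (by positivity)).deriv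

theorem invSqrtQuadratic_sq_mul (ha : 0 ≤ a) (hg : 0 < g) (x : ℝ) :
    invSqrtQuadratic a g x ^ 2 * (a * x ^ 2 + g) = 1 := by
  have hq : 0 < a * x ^ 2 + g := by positivity
  rw [invSqrtQuadratic, inv_pow, sq_sqrt hq.le, inv_mul_cancel₀ hq.ne']

theorem deriv_deriv_invSqrtQuadratic (ha : 0 ≤ a) (hg : 0 < g) (x : ℝ) :
    deriv (deriv (invSqrtQuadratic a g)) x
      = 2 * a * invSqrtQuadratic a g x ^ 3 - 3 * a * g * invSqrtQuadratic a g x ^ 5 := by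
  have hu := hasDerivAt_invSqrtQuadratic (a := a) (g := g) (x := x) (by positivity)
  have hu' : HasDerivAt (fun y => -(a * y) * invSqrtQuadratic a g y ^ 3)
      (-(a * 1) * invSqrtQuadratic a g x ^ 3
        + -(a * x) * (3 * invSqrtQuadratic a g x ^ 2 * (-(a * x) * invSqrtQuadratic a g x ^ 3))) x :=
    ((hasDerivAt_id x).const_mul a).neg.mul (hu.pow 3)
  rw [deriv_invSqrtQuadratic ha hg, hu'.deriv]
  linear_combination (3 * a * invSqrtQuadratic a g x ^ 3) * invSqrtQuadratic_sq_mul ha hg x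

theorem contDiff_invSqrtQuadratic (ha : 0 ≤ a) (hg : 0 < g) {n : WithTop ℕ∞} :
    ContDiff ℝ n (invSqrtQuadratic a g) := by
  have hq : ∀ x, a * x ^ 2 + g ≠ 0 := fun x => by positivity
  exact ((contDiff_const.mul (contDiff_id.pow 2)).add contDiff_const |>.sqrt hq).inv
    fun x => Real.sqrt_ne_zero'.mpr (by positivity)

end InvSqrtQuadratic

section Profile

variable {γ c : ℝ}

theorem PhiA_eq_mul_invSqrtQuadratic (hc : 0 ≤ c) :
    PhiA γ c = fun x => √(4 * c) * invSqrtQuadratic (c ^ 2) γ x := by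
  funext x
  rw [PhiA, invSqrtQuadratic, sqrt_div (by positivity), div_eq_mul_inv, mul_pow]

theorem PhiA_pos (hγ : 0 < γ) (hc : 0 < c) (x : ℝ) : 0 < PhiA γ c x :=
  Real.sqrt_pos.mpr (by positivity)

theorem PhiA_neg (x : ℝ) : PhiA γ c (-x) = PhiA γ c x := by
  simp [PhiA]

theorem tendsto_PhiA_cocompact : Tendsto (PhiA γ c) (cocompact ℝ) (nhds 0) := by
  rcases eq_or_ne c 0 with rfl | hc
  · have hzero : PhiA γ 0 = fun _ => 0 := by funext x; simp [PhiA]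
    rw [hzero]
    exact tendsto_const_nhds
  have hq : Tendsto (fun x : ℝ => (c * x) ^ 2 + γ) (cocompact ℝ) atTop := by
    refine tendsto_atTop_add_const_right _ γ ?_
    have := ((tendsto_pow_atTop two_ne_zero).comp (tendsto_norm_cocompact_atTop (E := ℝ))).atTop_mul_const
      (pow_pos (abs_pos.mpr hc) 2)
    simpa [Function.comp_def, mul_pow, mul_comm] using this
  unfold PhiA
  simpa only [sqrt_zero, Function.comp_def] using
    (continuous_sqrt.tendsto 0).comp (tendsto_const_nhds (x := 4 * c) |>.div_atTop hq)

theorem PhiA_ode (hγ : 0 < γ) (hc : 0 ≤ c) (x : ℝ) :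
    -deriv (deriv (PhiA γ c)) x + c / 2 * PhiA γ c x ^ 3 - 3 / 16 * γ * PhiA γ c x ^ 5 = 0 := by
  have hA : √(4 * c) ^ 2 = 4 * c := sq_sqrt (by positivity)
  simp only [PhiA_eq_mul_invSqrtQuadratic hc, deriv_const_mul_field']
  rw [deriv_deriv_invSqrtQuadratic (by positivity) hγ]
  set A := √(4 * c)
  set u := invSqrtQuadratic (c ^ 2) γ x
  linear_combination (c / 2 * A * u ^ 3 - 3 / 16 * γ * A * u ^ 5 * (A ^ 2 + 4 * c)) * hA

end Profile

/-- Verification that the algebraic soliton profile (the borderline case `c = 2√ω`)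
is smooth, positive, even, vanishes at infinity, and solves
`-Φ'' + (c/2)Φ³ - (3/16)γΦ⁵ = 0`. -/
theorem stmt_3 (b γ ω c : ℝ) (hb : -3 / 16 < b) (hγ : γ = 1 + 16 / 3 * b)
    (hω : 0 < ω) (hc : c = 2 * Real.sqrt ω) :
    ContDiff ℝ (⊤ : ℕ∞) (fun x => PhiA γ c x) ∧
    (∀ x : ℝ, 0 < PhiA γ c x) ∧
    (∀ x : ℝ, PhiA γ c (-x) = PhiA γ c x) ∧
    Tendsto (fun x => PhiA γ c x) (cocompact ℝ) (nhds 0) ∧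
    (∀ x : ℝ, -deriv (deriv (fun y => PhiA γ c y)) x
        + c / 2 * PhiA γ c x ^ 3 - 3 / 16 * γ * PhiA γ c x ^ 5 = 0) := by
  have hγ0 : 0 < γ := by rw [hγ]; linarith
  have hc0 : 0 < c := by rw [hc]; positivity
  refine ⟨?_, PhiA_pos hγ0 hc0, PhiA_neg, tendsto_PhiA_cocompact, PhiA_ode hγ0 hc0.le⟩
  rw [PhiA_eq_mul_invSqrtQuadratic hc0.le]
  exact contDiff_const.mul (contDiff_invSqrtQuadratic (by positivity) hγ0)
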